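/- arXiv:math/0702433 — 2 statements merged into one kernel-verified Lean document; each statement's English description precedes it below -/
import Mathlib

section
/- Given t = (t_1,...,t_k) ∈ 𝔞⁺, set s = ⌊t⌋/2 and u = t − (s/m,...,s/m, s/n,...,s/n) (with m copies of s/m and n copies of s/n). Then u ∈ 𝔞⁺, ⌊u⌋ ≥ ⌊t⌋/2, and g_t = g_s · g_u, where g_s = diag(e^{s/m},...,e^{s/m}, e^{-s/n},...,e^{-s/n}). -/
open Matrix

/-- `g_t` for `t ∈ 𝔞⁺` written as a pair `(t₁, t₂)`. -/
noncomputable def gt (m n : ℕ) (t₁ : Fin m → ℝ) (t₂ : Fin n → ℝ) :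
    Matrix (Fin m ⊕ Fin n) (Fin m ⊕ Fin n) ℝ :=
  Matrix.diagonal (Sum.elim (fun i => Real.exp (t₁ i)) (fun j => Real.exp (-(t₂ j))))

theorem stmt6 (m n : ℕ) (hm : 0 < m) (hn : 0 < n)
    (t₁ : Fin m → ℝ) (t₂ : Fin n → ℝ)
    (h₁ : ∀ i, 0 < t₁ i) (h₂ : ∀ j, 0 < t₂ j)
    (hsum : ∑ i, t₁ i = ∑ j, t₂ j)
    (tmin s : ℝ)
    (htmin : tmin = ⨅ a : Fin m ⊕ Fin n, Sum.elim t₁ t₂ a)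
    (hs : s = tmin / 2) :
    -- u = t − (s/m,…,s/m, s/n,…,s/n) belongs to 𝔞⁺
    (∀ i, 0 < t₁ i - s / m) ∧ (∀ j, 0 < t₂ j - s / n) ∧
    (∑ i, (t₁ i - s / m)) = (∑ j, (t₂ j - s / n)) ∧
    -- ⌊u⌋ ≥ ⌊t⌋ / 2
    tmin / 2 ≤ ⨅ a : Fin m ⊕ Fin n,
      Sum.elim (fun i => t₁ i - s / m) (fun j => t₂ j - s / n) a ∧
    -- g_t = g_s ⬝ g_u, with g_s = diag(e^{s/m},…,e^{s/m}, e^{-s/n},…,e^{-s/n})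
    gt m n t₁ t₂
      = Matrix.diagonal (Sum.elim (fun _ : Fin m => Real.exp (s / m))
          (fun _ : Fin n => Real.exp (-s / n)))
        * gt m n (fun i => t₁ i - s / m) (fun j => t₂ j - s / n) := by
  haveI : Nonempty (Fin m) := ⟨⟨0, hm⟩⟩
  haveI : Nonempty (Fin n) := ⟨⟨0, hn⟩⟩
  have hbdd : BddBelow (Set.range (Sum.elim t₁ t₂)) := Set.Finite.bddBelow (Set.finite_range _)
  have hle : ∀ a, tmin ≤ Sum.elim t₁ t₂ a := fun a => htmin ▸ ciInf_le hbdd a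
  have htpos : 0 < tmin := by
    obtain ⟨a, ha⟩ := Finite.exists_min (Sum.elim t₁ t₂)
    have : tmin = Sum.elim t₁ t₂ a := le_antisymm (hle a) (htmin ▸ le_ciInf ha)
    rw [this]; cases a with
    | inl i => exact h₁ i
    | inr j => exact h₂ j
  have hspos : 0 < s := by rw [hs]; linarith
  have hm1 : (1:ℝ) ≤ m := by exact_mod_cast hm
  have hn1 : (1:ℝ) ≤ n := by exact_mod_cast hn
  have hsm : s / m ≤ s := by
    rw [div_le_iff₀ (by linarith)]; nlinarith
  have hsn : s / n ≤ s := by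
    rw [div_le_iff₀ (by linarith)]; nlinarith
  have key1 : ∀ i, tmin / 2 ≤ t₁ i - s / m := fun i => by
    have := hle (Sum.inl i); simp at this; rw [hs] at hsm ⊢; linarith
  have key2 : ∀ j, tmin / 2 ≤ t₂ j - s / n := fun j => by
    have := hle (Sum.inr j); simp at this; rw [hs] at hsn ⊢; linarith
  refine ⟨fun i => lt_of_lt_of_le (by linarith) (key1 i),
    fun j => lt_of_lt_of_le (by linarith) (key2 j), ?_, ?_, ?_⟩
  · rw [Finset.sum_sub_distrib, Finset.sum_sub_distrib]
    simp only [Finset.sum_const, Finset.card_univ, Fintype.card_fin, nsmul_eq_mul]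
    have e1 : (m:ℝ) * (s / m) = s := by field_simp
    have e2 : (n:ℝ) * (s / n) = s := by field_simp
    rw [hsum, e1, e2]
  · exact le_ciInf fun a => by cases a with
      | inl i => exact key1 i
      | inr j => exact key2 j
  · rw [gt, gt, diagonal_mul_diagonal]
    refine congrArg Matrix.diagonal (funext fun a => ?_)
    cases a with
    | inl i => simp only [Sum.elim_inl, ← Real.exp_add]; congr 1; ring
    | inr j => simp only [Sum.elim_inr, ← Real.exp_add]; congr 1; ring
end

section
/- Let Γ be a discrete subgroup of a topological group G (Hausdorff, locally compact) and let L be a compact subset of G. Then there exists an open neighborhood U of the identity in G such that for every g ∈ L the map h ↦ hgΓ is injective on U; i.e., if h_1, h_2 ∈ U and h_1 g Γ = h_2 g Γ then h_1 = h_2. -/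
open Pointwise


theorem stmt14 (G : Type*) [Group G] [TopologicalSpace G] [IsTopologicalGroup G]
    [T2Space G] [LocallyCompactSpace G]
    (Γ : Subgroup G) (hΓ : DiscreteTopology Γ)
    (L : Set G) (hL : IsCompact L) :
    ∃ U : Set G, IsOpen U ∧ (1 : G) ∈ U ∧
      ∀ g ∈ L, ∀ h₁ ∈ U, ∀ h₂ ∈ U,
        (QuotientGroup.mk (h₁ * g) : G ⧸ Γ) = QuotientGroup.mk (h₂ * g) → h₁ = h₂ := by
  -- Step 1: an open neighborhood W of 1 meeting Γ only in 1.
  obtain ⟨W, hWopen, hW⟩ : ∃ W : Set G, IsOpen W ∧ ((↑) : Γ → G) ⁻¹' W = {1} := by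
    have : IsOpen ({1} : Set Γ) := isOpen_discrete _
    rwa [isOpen_induced_iff] at this
  have hW1 : (1 : G) ∈ W := by
    have : (1 : Γ) ∈ ((↑) : Γ → G) ⁻¹' W := by rw [hW]; rfl
    simpa using this
  have hWΓ : ∀ x ∈ W, x ∈ Γ → x = 1 := by
    intro x hx hxΓ
    have : (⟨x, hxΓ⟩ : Γ) ∈ ((↑) : Γ → G) ⁻¹' W := hx
    rw [hW] at this
    simpa using congrArg (Subtype.val) this
  -- Step 2: conjugation map
  let f : G × G → G := fun p => p.1⁻¹ * p.2 * p.1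
  have hf : Continuous f := by continuity
  have hopen : IsOpen (f ⁻¹' W) := hWopen.preimage hf
  -- for each g ∈ L, get open A g ∋ g and V g ∋ 1 with A g ×ˢ V g ⊆ f ⁻¹' W
  have key : ∀ g ∈ L, ∃ A V : Set G, IsOpen A ∧ IsOpen V ∧ g ∈ A ∧ (1 : G) ∈ V ∧
      ∀ a ∈ A, ∀ v ∈ V, a⁻¹ * v * a ∈ W := by
    intro g hg
    have hmem : (g, (1 : G)) ∈ f ⁻¹' W := by
      simp only [f, Set.mem_preimage, mul_one, inv_mul_cancel]
      exact hW1
    rcases isOpen_prod_iff.1 hopen g 1 hmem with ⟨A, V, hA, hV, hgA, h1V, hsub⟩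
    exact ⟨A, V, hA, hV, hgA, h1V, fun a ha v hv => hsub (Set.mk_mem_prod ha hv)⟩
  choose A V hAopen hVopen hgA h1V hconj using key
  -- Step 3: compactness, finite subcover
  obtain ⟨t, ht⟩ := hL.elim_nhds_subcover' (fun g hg => A g hg)
    (fun g hg => (hAopen g hg).mem_nhds (hgA g hg))
  -- V' = intersection
  let V' : Set G := ⋂ g ∈ t, V g g.2
  have hV'open : IsOpen V' := isOpen_biInter_finset (fun g _ => hVopen g g.2)
  have h1V' : (1 : G) ∈ V' := Set.mem_iInter₂.2 fun g _ => h1V g g.2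
  -- Step 4: U with U⁻¹ * U ⊆ V'
  obtain ⟨U₀, hU₀open, h1U₀, hU₀⟩ := exists_open_nhds_one_mul_subset (hV'open.mem_nhds h1V')
  refine ⟨U₀ ∩ U₀⁻¹, hU₀open.inter hU₀open.inv, ⟨h1U₀, by simpa using h1U₀⟩, ?_⟩
  intro g hg h₁ hh₁ h₂ hh₂ heq
  rw [QuotientGroup.eq] at heq
  -- (h₁ * g)⁻¹ * (h₂ * g) ∈ Γ
  have hx : h₁⁻¹ * h₂ ∈ V' := by
    have : h₁⁻¹ * h₂ ∈ U₀ * U₀ := Set.mul_mem_mul (by simpa using hh₁.2) hh₂.1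
    exact hU₀ this
  obtain ⟨a, hat, hga⟩ := Set.mem_iUnion₂.1 (ht hg)
  have hxV : h₁⁻¹ * h₂ ∈ V a a.2 := Set.mem_iInter₂.1 hx a hat
  have hWmem : g⁻¹ * (h₁⁻¹ * h₂) * g ∈ W := hconj a a.2 g hga _ hxV
  have hΓmem : g⁻¹ * (h₁⁻¹ * h₂) * g ∈ Γ := by
    have : (h₁ * g)⁻¹ * (h₂ * g) = g⁻¹ * (h₁⁻¹ * h₂) * g := by group
    rw [← this]; exact heq
  have := hWΓ _ hWmem hΓmem
  have h1 : h₁⁻¹ * h₂ = 1 := by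
    have := congrArg (fun x => g * x * g⁻¹) this
    simpa [mul_assoc] using this
  exact inv_mul_eq_one.1 h1
end
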